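/- arXiv:2505.13779 — 3 statements merged into one kernel-verified Lean document; each statement's English description precedes it below -/
import Mathlib

section
/- For every α ∈ ℤ^{ℤ/ℓℤ} there exist a unique ℓ-core ν and a unique integer n ∈ ℤ such that α = Res_ℓ(ν) + n·δ, where δ = (1,1,…,1) ∈ ℤ^{ℤ/ℓℤ}. -/
/-- The `ℓ`-residue of the box in row `r` and column `s` (0-indexed) is `s − r` modulo `ℓ`. -/
def boxRes (ℓ : ℕ) (c : ℕ × ℕ) : ZMod ℓ := (c.2 : ZMod ℓ) - (c.1 : ZMod ℓ)

/-- `Res_ℓ(λ) ∈ ℕ^{ℤ/ℓℤ}` (viewed inside `ℤ^{ℤ/ℓℤ}`) is the vector whose `i`-th entry is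
the number of boxes of `λ` of `ℓ`-residue `i`. -/
def ResL (ℓ : ℕ) (lam : YoungDiagram) : ZMod ℓ → ℤ :=
  fun i => ((lam.cells.filter (fun c => boxRes ℓ c = i)).card : ℤ)

/-- `Removals λ μ` holds if `μ` is obtained from `λ` by deleting a sequence of
removable boxes (i.e. `μ ≤ λ`). -/
def Removals (lam mu : YoungDiagram) : Prop :=
  Relation.ReflTransGen
    (fun x y : YoungDiagram => ∃ c ∈ x.cells, y.cells = x.cells.erase c) lam mu

/-- An elementary `ℓ`-step from `λ` is a partition `μ ≤ λ` such that the diagram of `λ`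
differs from that of `μ` by exactly `ℓ` boxes having pairwise distinct `ℓ`-residues. -/
def ElemStep (ℓ : ℕ) (lam mu : YoungDiagram) : Prop :=
  Removals lam mu ∧ (lam.cells \ mu.cells).card = ℓ ∧
    ∀ c ∈ lam.cells \ mu.cells, ∀ c' ∈ lam.cells \ mu.cells,
      c ≠ c' → boxRes ℓ c ≠ boxRes ℓ c'

/-- A partition is an `ℓ`-core if it admits no elementary `ℓ`-step. -/
def IsLCore (ℓ : ℕ) (lam : YoungDiagram) : Prop := ¬ ∃ mu, ElemStep ℓ lam mu

/-!
Put the beads of a diagram `λ` on an abacus with `ℓ` runners: row `q` gives the bead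
`λ_q - 1 - q`, shifted by a large `Q` so as to lie in `ℕ`, and the runner of a bead is its
residue mod `ℓ`. Summing residues along each row telescopes, so `Res_ℓ(λ)_i - Res_ℓ(λ)_{i+1}` is the
number of beads on one runner minus the same count for the empty diagram: these differences
record exactly the runner counts.

An elementary `ℓ`-step lowers every entry of `Res_ℓ` by one. Conversely, sliding a bead `s`
to a free position `s - ℓ` removes `ℓ` cells without changing the runner counts, so those cells
have one residue each and form an elementary step. Hence on the abacus of an `ℓ`-core every
runner is filled from the bottom, and the core is determined by its runner counts: this is
uniqueness. For existence, place beads with the runner counts prescribed by the differences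
`α_i - α_{i+1}`, strip elementary steps off the resulting diagram down to a core `ν`, and read
off `n` from the constant vector `α - Res_ℓ(ν)`.
-/

open Finset

theorem Finset.card_filter_le_add_le_card_filter_add_sub (S : Finset ℕ) (x : ℕ) {e e' : ℕ}
    (he : e ≤ e') : #{t ∈ S | x ≤ t + e'} ≤ #{t ∈ S | x ≤ t + e} + (e' - e) := by
  calc #{t ∈ S | x ≤ t + e'} ≤ #({t ∈ S | x ≤ t + e} ∪ Ico (x - e') (x - e)) :=
        card_le_card fun t ht => by
          simp only [mem_filter, mem_union, mem_Ico] at ht ⊢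
          by_cases hte : x ≤ t + e
          · exact .inl ⟨ht.1, hte⟩
          · omega
    _ ≤ #{t ∈ S | x ≤ t + e} + #(Ico (x - e') (x - e)) := card_union_le _ _
    _ ≤ #{t ∈ S | x ≤ t + e} + (e' - e) := by rw [Nat.card_Ico]; omega

theorem Finset.lt_card_filter_range_iff {P : ℕ → Prop} [DecidablePred P] {Q q : ℕ}
    (hP : ∀ p p', p ≤ p' → p' < Q → P p' → P p) :
    q < #{p ∈ range Q | P p} ↔ q < Q ∧ P q := by
  constructor
  · intro h
    have hqQ : q < Q := h.trans_le ((card_filter_le _ _).trans (card_range Q).le)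
    refine ⟨hqQ, by_contra fun hq => h.not_ge ?_⟩
    calc #{p ∈ range Q | P p} ≤ #(range q) := card_le_card fun p hp => by
          simp only [mem_filter, mem_range] at hp ⊢
          by_contra hpq
          exact hq (hP q p (by omega) hp.1 hp.2)
      _ = q := card_range q
  · rintro ⟨hqQ, hq⟩
    calc q < #(range (q + 1)) := by simp
      _ ≤ #{p ∈ range Q | P p} := card_le_card fun p hp => by
          simp only [mem_filter, mem_range] at hp ⊢
          exact ⟨by omega, hP p q (by omega) hqQ hq⟩

theorem Finset.sum_insert_erase_add {α M : Type*} [DecidableEq α] [AddCommMonoid M]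
    {S : Finset α} {a s : α} (ha : a ∉ S) (hs : s ∈ S) (g : α → M) :
    ∑ t ∈ insert a (S.erase s), g t + g s = ∑ t ∈ S, g t + g a := by
  rw [sum_insert fun h => ha (mem_of_mem_erase h), ← sum_erase_add _ _ hs]
  abel

theorem Finset.forall_card_filter_eq_one_iff {α β : Type*} [Fintype β] [DecidableEq β]
    {s : Finset α} {f : α → β} : (∀ b, #{a ∈ s | f a = b} = 1) ↔ #s = Fintype.card β ∧ Set.InjOn f s := by
  constructor
  · intro h
    refine ⟨?_, fun a ha a' ha' haa' => ?_⟩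
    · rw [card_eq_sum_card_fiberwise (f := f) (t := univ) fun _ _ => mem_univ _]
      simp [h]
    · have hle := (h (f a)).le
      rw [card_le_one] at hle
      exact hle a (mem_filter.mpr ⟨ha, rfl⟩) a' (mem_filter.mpr ⟨ha', haa'.symm⟩)
  · rintro ⟨hcard, hinj⟩ b
    have himg : s.image f = univ :=
      eq_univ_of_card _ (by rw [card_image_of_injOn hinj, hcard])
    obtain ⟨a, ha, rfl⟩ := mem_image.mp (himg ▸ mem_univ b)
    refine le_antisymm (card_le_one.mpr fun x hx y hy => ?_) (card_pos.mpr ⟨a, by simp [ha]⟩)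
    simp only [mem_filter] at hx hy
    exact hinj hx.1 hy.1 (hx.2.trans hy.2.symm)

theorem ZMod.apply_eq_apply_zero_of_forall_add_one {ℓ : ℕ} [NeZero ℓ] {M : Type*}
    {g : ZMod ℓ → M} (h : ∀ i, g (i + 1) = g i) (i : ZMod ℓ) : g i = g 0 := by
  obtain ⟨n, rfl⟩ := ZMod.natCast_zmod_surjective i
  induction n with
  | zero => simp
  | succ n ih => rw [Nat.cast_succ, h, ih]

theorem Removals.le {lam mu : YoungDiagram} (h : Removals lam mu) : mu ≤ lam := by
  induction h with
  | refl => exact le_rfl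
  | tail _ hstep ih =>
    obtain ⟨c, -, hc⟩ := hstep
    exact le_trans (YoungDiagram.cells_subset_iff.mp (hc ▸ erase_subset c _)) ih

theorem removals_of_le {lam mu : YoungDiagram} (h : mu ≤ lam) : Removals lam mu := by
  induction hn : #(lam.cells \ mu.cells) generalizing lam with
  | zero =>
    rw [card_eq_zero, sdiff_eq_empty_iff_subset, YoungDiagram.cells_subset_iff] at hn
    rw [le_antisymm hn h]
    exact .refl
  | succ n ih =>
    obtain ⟨c, hc⟩ := (lam.cells \ mu.cells).exists_maximal (card_pos.mp (by omega))
    obtain ⟨hcl, hcm⟩ := mem_sdiff.mp hc.prop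
    -- a cell maximal in `lam \ mu` is a removable cell of `lam`
    let lam' : YoungDiagram := ⟨lam.cells.erase c, fun a b hba ha => by
      simp only [coe_erase, Set.mem_sdiff, mem_coe, Set.mem_singleton_iff] at ha ⊢
      refine ⟨lam.isLowerSet hba ha.1, ?_⟩
      rintro rfl
      have ham : a ∉ mu.cells := fun ham => hcm (mu.isLowerSet hba ham)
      exact ha.2 (le_antisymm (hc.2 (mem_sdiff.mpr ⟨ha.1, ham⟩) hba) hba)⟩
    refine .head ⟨c, hcl, rfl⟩ (ih (lam := lam') (fun x hx => ?_) ?_)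
    · exact mem_erase.mpr ⟨fun hxc => hcm (hxc ▸ hx), h hx⟩
    · have : lam'.cells \ mu.cells = (lam.cells \ mu.cells).erase c := by
        ext x
        simp only [lam', mem_sdiff, mem_erase]
        tauto
      rw [this, card_erase_of_mem hc.prop, hn, Nat.add_sub_cancel]

namespace YoungDiagram

theorem fst_lt_colLen_zero {μ : YoungDiagram} {c : ℕ × ℕ} (hc : c ∈ μ) : c.1 < μ.colLen 0 :=
  mem_iff_lt_colLen.mp (μ.up_left_mem le_rfl (Nat.zero_le _) hc)

theorem sum_cells_eq_sum_range_rowLen {M : Type*} [AddCommMonoid M] (μ : YoungDiagram) {Q : ℕ}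
    (hQ : μ.colLen 0 ≤ Q) (f : ℕ × ℕ → M) :
    ∑ c ∈ μ.cells, f c = ∑ q ∈ range Q, ∑ j ∈ range (μ.rowLen q), f (q, j) := by
  rw [← sum_fiberwise_of_maps_to (g := Prod.fst) (t := range Q)
    fun c hc => mem_range.mpr ((fst_lt_colLen_zero hc).trans_le hQ)]
  refine sum_congr rfl fun q _ => ?_
  rw [show {c ∈ μ.cells | c.1 = q} = μ.row q from rfl, row_eq_prod, sum_product, sum_singleton]

theorem card_cells_eq_sum_rowLen (μ : YoungDiagram) {Q : ℕ} (hQ : μ.colLen 0 ≤ Q) :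
    #μ.cells = ∑ q ∈ range Q, μ.rowLen q := by
  rw [card_eq_sum_ones, sum_cells_eq_sum_range_rowLen μ hQ]
  simp

theorem resL_sub_resL_add_one_eq_sum_range (ℓ : ℕ) (μ : YoungDiagram) {Q : ℕ}
    (hQ : μ.colLen 0 ≤ Q) (i : ZMod ℓ) :
    ResL ℓ μ i - ResL ℓ μ (i + 1) = ∑ q ∈ range Q,
      ((if (μ.rowLen q : ZMod ℓ) - 1 - q = i then 1 else 0) -
        if -1 - (q : ZMod ℓ) = i then 1 else 0) := by
  simp only [ResL, card_filter, Nat.cast_sum, Nat.cast_ite, Nat.cast_one, Nat.cast_zero,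
    ← sum_sub_distrib, sum_cells_eq_sum_range_rowLen μ hQ]
  refine sum_congr rfl fun q _ => ?_
  have hres (j : ℕ) : boxRes ℓ (q, j) = i ↔ ((j + 1 : ℕ) : ZMod ℓ) - 1 - q = i := by
    simp only [boxRes, Nat.cast_add, Nat.cast_one, add_sub_cancel_right]
  have hres' (j : ℕ) : boxRes ℓ (q, j) = i + 1 ↔ (j : ZMod ℓ) - 1 - q = i := by
    simp only [boxRes]
    constructor <;> intro h <;> linear_combination h
  simp only [hres, hres']
  rw [sum_range_sub (fun j : ℕ => if (j : ZMod ℓ) - 1 - q = i then (1 : ℤ) else 0),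
    Nat.cast_zero, zero_sub]

/-- The beads of the first `Q` rows of `μ` on the abacus: row `q` carries the bead
`μ.rowLen q - 1 - q`, shifted by `Q` so as to lie in `ℕ`. -/
def beads (μ : YoungDiagram) (Q : ℕ) : Finset ℕ :=
  (range Q).image fun q => μ.rowLen q + (Q - 1 - q)

theorem injOn_rowLen_add_sub (μ : YoungDiagram) (Q : ℕ) :
    Set.InjOn (fun q => μ.rowLen q + (Q - 1 - q)) (range Q) := by
  intro p hp p' hp' h
  simp only [coe_range, Set.mem_Iio] at hp hp' h
  rcases lt_trichotomy p p' with hlt | rfl | hlt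
  · have := μ.rowLen_anti p p' hlt.le; omega
  · rfl
  · have := μ.rowLen_anti p' p hlt.le; omega

theorem card_beads (μ : YoungDiagram) (Q : ℕ) : #(μ.beads Q) = Q := by
  rw [beads, card_image_of_injOn (injOn_rowLen_add_sub μ Q), card_range]

theorem sum_beads (μ : YoungDiagram) {Q : ℕ} (hQ : μ.colLen 0 ≤ Q) :
    ∑ s ∈ μ.beads Q, s = #μ.cells + ∑ q ∈ range Q, (Q - 1 - q) := by
  rw [beads, sum_image (injOn_rowLen_add_sub μ Q), sum_add_distrib, card_cells_eq_sum_rowLen μ hQ]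

theorem resL_sub_resL_add_one_eq_card_beads (ℓ : ℕ) (μ : YoungDiagram) {Q : ℕ}
    (hQ : μ.colLen 0 ≤ Q) (i : ZMod ℓ) :
    ResL ℓ μ i - ResL ℓ μ (i + 1) = #{s ∈ μ.beads Q | ((s : ℕ) : ZMod ℓ) = i + Q} -
      #{q ∈ range Q | ((q : ℕ) : ZMod ℓ) = -1 - i} := by
  rw [resL_sub_resL_add_one_eq_sum_range ℓ μ hQ, sum_sub_distrib, sum_boole, sum_boole, beads,
    filter_image, card_image_of_injOn ((injOn_rowLen_add_sub μ Q).mono (filter_subset _ _))]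
  congr 3
  · refine filter_congr fun q hq => ?_
    obtain ⟨r, rfl⟩ := Nat.exists_eq_add_of_lt (mem_range.mp hq)
    rw [show q + r + 1 - 1 - q = r by omega]
    push_cast
    constructor <;> intro h <;> linear_combination h
  · exact filter_congr fun q _ => by constructor <;> intro h <;> linear_combination -h

theorem mem_range_prod_of_lt_card_filter {S : Finset ℕ} {c : ℕ × ℕ}
    (h : c.1 < #{t ∈ S | c.2 + #S ≤ t + c.1}) : c ∈ range #S ×ˢ range (S.sup id + 1) := by
  obtain ⟨t, ht⟩ := card_pos.mp (Nat.zero_lt_of_lt h)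
  have hts := le_sup (f := id) (mem_filter.mp ht).1
  have hcS := h.trans_le (card_filter_le _ _)
  simp only [mem_product, mem_range, id, mem_filter] at ht hts ⊢
  omega

/-- The Young diagram whose row `q` has length `t - (#S - 1 - q)`, where `t` is the `q`-th
largest element of `S`. The `q`-th largest element of `S` exceeds `y` iff more than `q`
elements do, which describes the cells without sorting `S`. -/
def ofBeads (S : Finset ℕ) : YoungDiagram where
  cells := {c ∈ range #S ×ˢ range (S.sup id + 1) | c.1 < #{t ∈ S | c.2 + #S ≤ t + c.1}}
  isLowerSet := by
    intro a b hba ha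
    simp only [coe_filter, Set.mem_ofPred_eq] at ha ⊢
    have hcount := card_filter_le_add_le_card_filter_add_sub S (a.2 + #S) hba.1
    have hmono : #{t ∈ S | a.2 + #S ≤ t + b.1} ≤ #{t ∈ S | b.2 + #S ≤ t + b.1} :=
      card_le_card fun t ht => by
        simp only [mem_filter] at ht ⊢
        exact ⟨ht.1, by have := hba.2; omega⟩
    have hb : b.1 < #{t ∈ S | b.2 + #S ≤ t + b.1} := by have := hba.1; omega
    exact ⟨mem_range_prod_of_lt_card_filter hb, hb⟩

theorem mem_ofBeads {S : Finset ℕ} {c : ℕ × ℕ} :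
    c ∈ ofBeads S ↔ c.1 < #{t ∈ S | c.2 + #S ≤ t + c.1} :=
  mem_filter.trans ⟨And.right, fun h => ⟨mem_range_prod_of_lt_card_filter h, h⟩⟩

theorem colLen_ofBeads_le (S : Finset ℕ) : (ofBeads S).colLen 0 ≤ #S := by
  by_contra! h
  have := mem_ofBeads.mp (mem_iff_lt_colLen.mpr h)
  exact this.not_ge (card_filter_le _ _)

theorem ofBeads_beads (μ : YoungDiagram) {Q : ℕ} (hQ : μ.colLen 0 ≤ Q) :
    ofBeads (μ.beads Q) = μ := by
  refine YoungDiagram.ext (Finset.ext fun ⟨q, j⟩ => ?_)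
  rw [mem_cells, mem_cells, mem_ofBeads, card_beads, beads, filter_image,
    card_image_of_injOn ((injOn_rowLen_add_sub μ Q).mono (filter_subset _ _)),
    lt_card_filter_range_iff fun p p' hpp' hp'Q h => by
      have := μ.rowLen_anti p p' hpp'
      omega,
    mem_iff_lt_rowLen]
  dsimp only
  constructor
  · rintro ⟨hq, h⟩
    omega
  · intro h
    have := fst_lt_colLen_zero (mem_iff_lt_rowLen.mpr h)
    omega

theorem beads_ofBeads (S : Finset ℕ) : (ofBeads S).beads #S = S := by
  refine eq_of_subset_of_card_le (fun s hs => ?_) (by rw [card_beads])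
  obtain ⟨q, hq, rfl⟩ := mem_image.mp hs
  rw [mem_range] at hq
  set r := (ofBeads S).rowLen q
  have hout : ¬ q < #{t ∈ S | r + #S ≤ t + q} := by
    rw [← mem_ofBeads (c := (q, r)), mem_iff_lt_rowLen]
    exact lt_irrefl r
  have hin : q < #{t ∈ S | r + (#S - 1 - q) ≤ t} := by
    rcases Nat.eq_zero_or_pos r with hr | hr
    · have hsplit := card_filter_add_card_filter_not (s := S)
        (fun t => r + (#S - 1 - q) ≤ t)
      have hbelow : #{t ∈ S | ¬ r + (#S - 1 - q) ≤ t} ≤ #S - 1 - q :=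
        (card_le_card (t := range (#S - 1 - q)) fun t ht => by
          simp only [mem_filter, mem_range] at ht ⊢
          omega).trans (card_range _).le
      omega
    · have hlast := mem_ofBeads.mp (mem_iff_lt_rowLen.mpr (Nat.sub_lt hr one_pos) :
        (q, r - 1) ∈ ofBeads S)
      exact hlast.trans_le (card_le_card fun t ht => by
        simp only [mem_filter] at ht ⊢
        exact ⟨ht.1, by omega⟩)
  by_contra hs
  refine hout (hin.trans_le (card_le_card fun t ht => ?_))
  simp only [mem_filter] at ht ⊢
  have : t ≠ r + (#S - 1 - q) := fun h => hs (h ▸ ht.1)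
  exact ⟨ht.1, by omega⟩

end YoungDiagram

theorem resL_sub_resL_of_le (ℓ : ℕ) {lam mu : YoungDiagram} (h : mu ≤ lam) (i : ZMod ℓ) :
    ResL ℓ lam i - ResL ℓ mu i = #{c ∈ lam.cells \ mu.cells | boxRes ℓ c = i} := by
  have hsub : mu.cells ⊆ lam.cells := YoungDiagram.cells_subset_iff.mpr h
  have hsplit : {c ∈ lam.cells | boxRes ℓ c = i} =
      {c ∈ lam.cells \ mu.cells | boxRes ℓ c = i} ∪ {c ∈ mu.cells | boxRes ℓ c = i} := by
    rw [← filter_union, sdiff_union_of_subset hsub]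
  rw [ResL, ResL, hsplit, card_union_of_disjoint (disjoint_filter_filter sdiff_disjoint)]
  push_cast
  ring

theorem ElemStep.card_cells {ℓ : ℕ} {lam mu : YoungDiagram} (h : ElemStep ℓ lam mu) :
    #lam.cells = #mu.cells + ℓ := by
  rw [← h.2.1, add_comm, card_sdiff_add_card_eq_card (YoungDiagram.cells_subset_iff.mpr h.1.le)]

theorem ElemStep.resL_eq_add_one {ℓ : ℕ} [NeZero ℓ] {lam mu : YoungDiagram}
    (h : ElemStep ℓ lam mu) (i : ZMod ℓ) : ResL ℓ lam i = ResL ℓ mu i + 1 := by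
  obtain ⟨hrem, hcard, hdist⟩ := h
  have hfiber := forall_card_filter_eq_one_iff.mpr ⟨hcard.trans (ZMod.card ℓ).symm,
    fun c hc c' hc' hres => by_contra fun hne => hdist c hc c' hc' hne hres⟩ i
  have := resL_sub_resL_of_le ℓ hrem.le i
  rw [hfiber] at this
  omega

theorem elemStep_of_le {ℓ : ℕ} [NeZero ℓ] {lam mu : YoungDiagram} (hle : mu ≤ lam)
    (hcard : #lam.cells = #mu.cells + ℓ)
    (hres : ∀ i, ResL ℓ lam i - ResL ℓ lam (i + 1) = ResL ℓ mu i - ResL ℓ mu (i + 1)) :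
    ElemStep ℓ lam mu := by
  set F : ZMod ℓ → ℕ := fun i => #{c ∈ lam.cells \ mu.cells | boxRes ℓ c = i}
  have hF : ∀ i, F i = F 0 := ZMod.apply_eq_apply_zero_of_forall_add_one fun i => by
    have h0 := resL_sub_resL_of_le ℓ hle i
    have h1 := resL_sub_resL_of_le ℓ hle (i + 1)
    have := hres i
    simp only [F]
    omega
  have hsum : #(lam.cells \ mu.cells) = ℓ := by
    have := card_sdiff_add_card_eq_card (YoungDiagram.cells_subset_iff.mpr hle)
    omega
  have hF0 : F 0 = 1 := by
    have hfibers : ∑ i, F i = ℓ :=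
      (card_eq_sum_card_fiberwise fun _ _ => mem_univ _).symm.trans hsum
    rw [sum_congr rfl fun i _ => hF i, sum_const, card_univ, ZMod.card, smul_eq_mul] at hfibers
    exact (Nat.mul_eq_left (NeZero.ne ℓ)).mp hfibers
  obtain ⟨hcard', hinj⟩ := forall_card_filter_eq_one_iff.mp fun i => (hF i).trans hF0
  exact ⟨removals_of_le hle, hcard'.trans (ZMod.card ℓ), fun c hc c' hc' hne hres =>
    hne (hinj hc hc' hres)⟩

theorem exists_isLCore_resL_eq_add (ℓ : ℕ) [NeZero ℓ] (lam : YoungDiagram) :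
    ∃ nu : YoungDiagram, ∃ k : ℕ, IsLCore ℓ nu ∧ ∀ i, ResL ℓ lam i = ResL ℓ nu i + k := by
  induction hN : #lam.cells using Nat.strong_induction_on generalizing lam with
  | _ N ih =>
    by_cases hcore : IsLCore ℓ lam
    · exact ⟨lam, 0, hcore, fun i => by simp⟩
    obtain ⟨mu, hstep⟩ := not_not.mp hcore
    have hlt : #mu.cells < N := by
      have := hstep.card_cells
      have := NeZero.pos ℓ
      omega
    obtain ⟨nu, k, hnu, hk⟩ := ih _ hlt mu rfl
    exact ⟨nu, k + 1, hnu, fun i => by rw [hstep.resL_eq_add_one, hk]; push_cast; ring⟩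

open YoungDiagram in
theorem exists_elemStep_of_sub_notMem_beads {ℓ : ℕ} [NeZero ℓ] {lam : YoungDiagram} {Q s : ℕ}
    (hQ : lam.colLen 0 ≤ Q) (hs : s ∈ lam.beads Q) (hℓs : ℓ ≤ s) (hs' : s - ℓ ∉ lam.beads Q) :
    ∃ mu, ElemStep ℓ lam mu := by
  set S' := insert (s - ℓ) ((lam.beads Q).erase s)
  have hmove (g : ℕ → ℕ) : ∑ t ∈ S', g t + g s = ∑ t ∈ lam.beads Q, g t + g (s - ℓ) :=
    sum_insert_erase_add hs' hs g
  have hcount (P : ℕ → Prop) [DecidablePred P] : #{t ∈ S' | P t} + (if P s then 1 else 0) =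
      #{t ∈ lam.beads Q | P t} + if P (s - ℓ) then 1 else 0 := by
    simpa only [card_filter] using hmove fun t => if P t then 1 else 0
  have hcard : #S' = Q := by
    have := hcount fun _ => True
    simp only [filter_true, if_true, card_beads] at this
    omega
  have hQ' : (ofBeads S').colLen 0 ≤ Q := hcard ▸ colLen_ofBeads_le S'
  have hbeads' : (ofBeads S').beads Q = S' := hcard ▸ beads_ofBeads S'
  refine ⟨ofBeads S', elemStep_of_le (fun c hc => ?_) ?_ fun i => ?_⟩
  · rw [mem_ofBeads, hcard] at hc
    rw [← ofBeads_beads lam hQ, mem_ofBeads, card_beads]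
    have := hcount fun t => c.2 + Q ≤ t + c.1
    split_ifs at this <;> omega
  · have h1 := sum_beads lam hQ
    have h2 := sum_beads (ofBeads S') hQ'
    rw [hbeads'] at h2
    have := hmove fun t => t
    omega
  · have hres : ((s - ℓ : ℕ) : ZMod ℓ) = s := by simp [Nat.cast_sub hℓs]
    rw [resL_sub_resL_add_one_eq_card_beads ℓ lam hQ, resL_sub_resL_add_one_eq_card_beads ℓ _ hQ',
      hbeads']
    have := hcount fun t => (t : ZMod ℓ) = i + Q
    simp only [hres] at this
    omega

theorem IsLCore.sub_mem_beads {ℓ : ℕ} [NeZero ℓ] {lam : YoungDiagram} (h : IsLCore ℓ lam)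
    {Q s : ℕ} (hQ : lam.colLen 0 ≤ Q) (hs : s ∈ lam.beads Q) (hℓs : ℓ ≤ s) :
    s - ℓ ∈ lam.beads Q :=
  by_contra fun hs' => h (exists_elemStep_of_sub_notMem_beads hQ hs hℓs hs')

theorem Finset.sub_mul_mem_of_forall_sub_mem {ℓ : ℕ} {S : Finset ℕ}
    (hS : ∀ s ∈ S, ℓ ≤ s → s - ℓ ∈ S) {s : ℕ} (hs : s ∈ S) (k : ℕ) (hk : k * ℓ ≤ s) :
    s - k * ℓ ∈ S := by
  induction k with
  | zero => simpa using hs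
  | succ k ih =>
    rw [Nat.succ_mul, ← Nat.sub_sub]
    exact hS _ (ih (by rw [Nat.succ_mul] at hk; omega)) (by rw [Nat.succ_mul] at hk; omega)

theorem Finset.div_lt_card_filter_of_mem {ℓ : ℕ} [NeZero ℓ] {S : Finset ℕ}
    (hS : ∀ s ∈ S, ℓ ≤ s → s - ℓ ∈ S) {y : ℕ} (hy : y ∈ S) :
    y / ℓ < #{t ∈ S | ((t : ℕ) : ZMod ℓ) = y} := by
  have hmul {k : ℕ} (hk : k ∈ range (y / ℓ + 1)) : k * ℓ ≤ y :=
    (Nat.mul_le_mul_right ℓ (Nat.lt_succ_iff.mp (mem_range.mp hk))).trans (Nat.div_mul_le_self y ℓ)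
  refine Nat.lt_of_succ_le ((card_range _).symm.trans_le
    (card_le_card_of_injOn (fun k => y - k * ℓ) (fun k hk => ?_) fun k hk k' hk' h => ?_))
  · simp [sub_mul_mem_of_forall_sub_mem hS hy k (hmul hk), Nat.cast_sub (hmul hk)]
  · have := hmul hk
    have := hmul hk'
    exact Nat.eq_of_mul_eq_mul_right (NeZero.pos ℓ) (by simp only at h; omega)

theorem Finset.card_filter_le_div_of_notMem {ℓ : ℕ} [NeZero ℓ] {S : Finset ℕ}
    (hS : ∀ s ∈ S, ℓ ≤ s → s - ℓ ∈ S) {y : ℕ} (hy : y ∉ S) :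
    #{t ∈ S | ((t : ℕ) : ZMod ℓ) = y} ≤ y / ℓ := by
  have hmod {t : ℕ} (ht : t ∈ {t ∈ S | ((t : ℕ) : ZMod ℓ) = y}) : t % ℓ = y % ℓ :=
    (ZMod.natCast_eq_natCast_iff' t y ℓ).mp (mem_filter.mp ht).2
  refine (card_le_card_of_injOn (· / ℓ) (fun t ht => ?_) fun t ht t' ht' h => ?_).trans
    (card_range _).le
  · have hty : t < y := by
      by_contra! hyt
      have hdvd : ℓ ∣ t - y := Nat.dvd_of_mod_eq_zero (Nat.sub_mod_eq_zero_of_mod_eq (hmod ht))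
      have := sub_mul_mem_of_forall_sub_mem hS (mem_filter.mp ht).1 _
        ((Nat.div_mul_cancel hdvd).le.trans (Nat.sub_le t y))
      rw [Nat.div_mul_cancel hdvd, Nat.sub_sub_self hyt] at this
      exact hy this
    have := Nat.div_add_mod t ℓ
    have := Nat.div_add_mod y ℓ
    have := hmod ht
    exact mem_range.mpr (Nat.lt_of_mul_lt_mul_left (a := ℓ) (by dsimp only; omega))
  · have := Nat.div_add_mod t ℓ
    have := Nat.div_add_mod t' ℓ
    have := hmod ht
    have := hmod ht'
    simp only at h
    rw [h] at *
    omega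

/-- On each runner of the `ℓ`-abacus a set closed under `s ↦ s - ℓ` fills an initial segment,
so membership is decided by the number of beads on the runner. -/
theorem Finset.mem_iff_div_lt_card_filter {ℓ : ℕ} [NeZero ℓ] {S : Finset ℕ}
    (hS : ∀ s ∈ S, ℓ ≤ s → s - ℓ ∈ S) (y : ℕ) :
    y ∈ S ↔ y / ℓ < #{t ∈ S | ((t : ℕ) : ZMod ℓ) = y} :=
  ⟨div_lt_card_filter_of_mem hS, fun h => by_contra fun hy =>
    h.not_ge (card_filter_le_div_of_notMem hS hy)⟩

theorem Finset.eq_of_forall_card_filter_natCast_eq {ℓ : ℕ} [NeZero ℓ] {S T : Finset ℕ}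
    (hS : ∀ s ∈ S, ℓ ≤ s → s - ℓ ∈ S) (hT : ∀ t ∈ T, ℓ ≤ t → t - ℓ ∈ T)
    (h : ∀ i : ZMod ℓ, #{s ∈ S | ((s : ℕ) : ZMod ℓ) = i} = #{t ∈ T | ((t : ℕ) : ZMod ℓ) = i}) :
    S = T :=
  Finset.ext fun y => by rw [mem_iff_div_lt_card_filter hS, mem_iff_div_lt_card_filter hT, h]

theorem IsLCore.eq_of_resL_sub_resL_add_one {ℓ : ℕ} [NeZero ℓ] {lam mu : YoungDiagram}
    (hlam : IsLCore ℓ lam) (hmu : IsLCore ℓ mu)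
    (h : ∀ i, ResL ℓ lam i - ResL ℓ lam (i + 1) = ResL ℓ mu i - ResL ℓ mu (i + 1)) : lam = mu := by
  have hl : lam.colLen 0 ≤ lam.colLen 0 + mu.colLen 0 := Nat.le_add_right _ _
  have hm : mu.colLen 0 ≤ lam.colLen 0 + mu.colLen 0 := Nat.le_add_left _ _
  have hbeads := eq_of_forall_card_filter_natCast_eq (fun s hs => hlam.sub_mem_beads hl hs)
    (fun s hs => hmu.sub_mem_beads hm hs) fun a => by
      have := h (a - (lam.colLen 0 + mu.colLen 0 : ℕ))
      rw [YoungDiagram.resL_sub_resL_add_one_eq_card_beads ℓ lam hl,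
        YoungDiagram.resL_sub_resL_add_one_eq_card_beads ℓ mu hm, sub_add_cancel] at this
      omega
  rw [← YoungDiagram.ofBeads_beads lam hl, hbeads, YoungDiagram.ofBeads_beads mu hm]

theorem exists_finset_card_filter_natCast_eq {ℓ : ℕ} [NeZero ℓ] (c : ZMod ℓ → ℕ) :
    ∃ S : Finset ℕ, ∀ i : ZMod ℓ, #{s ∈ S | ((s : ℕ) : ZMod ℓ) = i} = c i := by
  refine ⟨univ.biUnion fun i => (range (c i)).image fun j => i.val + ℓ * j, fun i => ?_⟩
  have hres (i' : ZMod ℓ) (j : ℕ) : ((i'.val + ℓ * j : ℕ) : ZMod ℓ) = i' := by simp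
  have hfiber : {s ∈ univ.biUnion (fun i => (range (c i)).image fun j => i.val + ℓ * j) |
      ((s : ℕ) : ZMod ℓ) = i} = (range (c i)).image fun j => i.val + ℓ * j := by
    ext s
    simp only [mem_filter, mem_biUnion, mem_univ, true_and, mem_image]
    constructor
    · rintro ⟨⟨i', j, hj, rfl⟩, hi⟩
      rw [hres] at hi
      exact ⟨j, hi ▸ hj, hi ▸ rfl⟩
    · rintro ⟨j, hj, rfl⟩
      exact ⟨⟨i, j, hj, rfl⟩, hres i j⟩
  rw [hfiber, card_image_of_injective _ fun j j' h => by
    simpa [NeZero.ne ℓ] using h, card_range]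

theorem le_card_filter_range_mul {ℓ : ℕ} [NeZero ℓ] (K : ℕ) (a : ZMod ℓ) :
    K ≤ #{q ∈ range (ℓ * K) | ((q : ℕ) : ZMod ℓ) = a} := by
  refine (card_range K).symm.trans_le (card_le_card_of_injOn (fun j => a.val + ℓ * j)
    (fun j hj => ?_) fun j _ j' _ h => by simpa [NeZero.ne ℓ] using h)
  have hj : j + 1 ≤ K := mem_range.mp hj
  have : a.val + ℓ * j < ℓ * K := by nlinarith [ZMod.val_lt a]
  simp [this]

open YoungDiagram in
theorem exists_resL_sub_resL_add_one_eq {ℓ : ℕ} [NeZero ℓ] (α : ZMod ℓ → ℤ) :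
    ∃ mu : YoungDiagram, ∀ i, ResL ℓ mu i - ResL ℓ mu (i + 1) = α i - α (i + 1) := by
  obtain ⟨K, hK⟩ : ∃ K : ℕ, ∀ i, (α i - α (i + 1)).natAbs ≤ K :=
    ⟨_, fun i => single_le_sum (f := fun i => (α i - α (i + 1)).natAbs) (by simp) (mem_univ i)⟩
  let empty (a : ZMod ℓ) : ℕ := #{q ∈ range (ℓ * K) | ((q : ℕ) : ZMod ℓ) = a}
  -- runner `i` receives `α i - α (i + 1)` more beads than the empty diagram has on it
  have hr (i : ZMod ℓ) : ((α i - α (i + 1) + empty (-1 - i)).toNat : ℤ) =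
      α i - α (i + 1) + empty (-1 - i) := by
    have : K ≤ empty (-1 - i) := le_card_filter_range_mul K (-1 - i)
    have := hK i
    omega
  obtain ⟨S, hS⟩ := exists_finset_card_filter_natCast_eq fun i =>
    (α i - α (i + 1) + empty (-1 - i)).toNat
  have hSQ : #S = ℓ * K := by
    have hα : ∑ i, (α i - α (i + 1)) = 0 := by
      rw [sum_sub_distrib, sub_eq_zero,
        Fintype.sum_equiv (Equiv.addRight 1) (fun i => α (i + 1)) α fun _ => rfl]
    have hempty : ∑ i, empty (-1 - i) = ℓ * K := by
      rw [Fintype.sum_equiv (Equiv.subLeft (-1)) (fun i => empty (-1 - i)) empty fun _ => rfl,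
        ← card_eq_sum_card_fiberwise fun _ _ => mem_univ _, card_range]
    zify
    rw [card_eq_sum_card_fiberwise (f := fun s : ℕ => (s : ZMod ℓ)) (t := univ)
      fun _ _ => mem_univ _]
    push_cast
    simp only [hS, hr, sum_add_distrib, hα, zero_add]
    exact_mod_cast hempty
  refine ⟨ofBeads S, fun i => ?_⟩
  rw [resL_sub_resL_add_one_eq_card_beads ℓ _ (colLen_ofBeads_le S), beads_ofBeads, hSQ, hS, hr]
  simp [empty]

/-- For every `α ∈ ℤ^{ℤ/ℓℤ}` there exist a unique `ℓ`-core `ν` and a unique integer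
`n ∈ ℤ` such that `α = Res_ℓ(ν) + n·δ`, where `δ = (1,1,…,1) ∈ ℤ^{ℤ/ℓℤ}`. -/
theorem exists_unique_core_shift (ℓ : ℕ) (hℓ : 0 < ℓ) (α : ZMod ℓ → ℤ) :
    ∃! p : YoungDiagram × ℤ,
      IsLCore ℓ p.1 ∧ α = ResL ℓ p.1 + p.2 • (fun _ => (1 : ℤ)) := by
  have : NeZero ℓ := ⟨hℓ.ne'⟩
  obtain ⟨mu, hmu⟩ := exists_resL_sub_resL_add_one_eq α
  obtain ⟨nu, k, hnu, hk⟩ := exists_isLCore_resL_eq_add ℓ mu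
  have hconst := ZMod.apply_eq_apply_zero_of_forall_add_one (g := fun i => α i - ResL ℓ nu i)
    fun i => by have := hmu i; rw [hk, hk] at this; linarith
  refine ⟨(nu, α 0 - ResL ℓ nu 0), ⟨hnu, funext fun i => ?_⟩, ?_⟩
  · have := hconst i
    simp only [Pi.add_apply, Pi.smul_apply, smul_eq_mul, mul_one] at this ⊢
    linarith
  rintro ⟨nu', n'⟩ ⟨hnu', hα⟩
  have hα' (i : ZMod ℓ) : α i = ResL ℓ nu' i + n' := by simpa using congrFun hα i
  obtain rfl : nu' = nu := hnu'.eq_of_resL_sub_resL_add_one hnu fun i => by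
    have := hconst i
    have := hconst (i + 1)
    simp only [hα'] at *
    linarith
  simp [hα']
end

section
/- Assume ℓ ≥ 2, let c ∈ ℂ^{ℤ/ℓℤ}, set J = {i ∈ ℤ/ℓℤ : c_i = 0}, and suppose c is J-standard, i.e., the stabilizer of c in W equals W_J. Then for all integers a ≤ b, if Σ_{i=a}^{b} c_{i mod ℓ} = 0 then c_{i mod ℓ} = 0 for every integer i with a ≤ i ≤ b. -/
/-- The Cartan matrix of the cycle of length `ℓ`: `C_{jj} = 2` and, for `i ≠ j`,
`C_{ji} = −([i = j+1] + [i = j−1])` with indices in `ℤ/ℓℤ`. -/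
def cycleCartan (ℓ : ℕ) (j i : ZMod ℓ) : ℤ :=
  if i = j then 2
  else -(((if i = j + 1 then 1 else 0) + (if i = j - 1 then 1 else 0) : ℤ))

/-- The dual reflection `s_j* : ℂ^{ℤ/ℓℤ} → ℂ^{ℤ/ℓℤ}`, `(s_j* c)_i = c_i − C_{ji}·c_j`. -/
def sStar (ℓ : ℕ) (j : ZMod ℓ) (c : ZMod ℓ → ℂ) : ZMod ℓ → ℂ :=
  fun i => c i - (cycleCartan ℓ j i : ℂ) * c j

/-- The group `W` of bijections of `ℂ^{ℤ/ℓℤ}` generated by the dual reflections `s_j*`. -/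
def WStar (ℓ : ℕ) : Subgroup (Equiv.Perm (ZMod ℓ → ℂ)) :=
  Subgroup.closure {σ | ∃ j : ZMod ℓ, ∀ c, σ c = sStar ℓ j c}

/-- The subgroup `W_J ≤ W` generated by `{s_j* : j ∈ J}`. -/
def WStarJ (ℓ : ℕ) (J : Set (ZMod ℓ)) : Subgroup (Equiv.Perm (ZMod ℓ → ℂ)) :=
  Subgroup.closure {σ | ∃ j ∈ J, ∀ c, σ c = sStar ℓ j c}

/-!
Encode `c` by its cumulative sums `cumSum c : ℤ → ℂ`, so that `cumSum c (i + 1) = cumSum c i + c i`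
and `cumSum c (i + ℓ) = cumSum c i + cumSum c ℓ`. The reflection `s_j*` acts by precomposing
`cumSum c` with the affine transposition of `ℤ` exchanging the residue classes `j` and `j + 1`
(renormalised at `0`). Conjugating and composing these, `W` realises the affine transposition
`affSwap p n` of the classes `p` and `p + n` whenever `ℓ ∤ n`, and the translation `affShift u v`
moving the class `u` up and the class `v` down by `ℓ`.

If `∑_{a ≤ i < a + n} c_i = 0`, i.e. `cumSum c (a + n) = cumSum c a`, then for `ℓ ∤ n` the
transposition `affSwap a n` fixes `c`, while for `ℓ ∣ n` the period `cumSum c ℓ` vanishes and every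
translation fixes `c`. By standardness this element of `W` lies in `W_J`, so it also fixes any `d`
vanishing on `J`, in particular the indicator of the support of `c`. Reading this off at `a` and
`a + n` (at `0` and `1` for the translation) gives `∑_{a ≤ i < a + n} d_i = 0`.
-/

open Finset

variable {ℓ : ℕ}

noncomputable def cumSum (c : ZMod ℓ → ℂ) (i : ℤ) : ℂ :=
  ∑ k ∈ Ico 0 i, c k - ∑ k ∈ Ico i 0, c k

namespace cumSum

variable (c : ZMod ℓ → ℂ)

@[simp] lemma zero : cumSum c 0 = 0 := by simp [cumSum]

lemma add_one (i : ℤ) : cumSum c (i + 1) = cumSum c i + c i := by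
  unfold cumSum
  rcases le_or_gt 0 i with hi | hi
  · rw [← sum_Ico_add_eq_sum_Ico_add_one hi, Ico_eq_empty_of_le hi,
      Ico_eq_empty_of_le (by omega : (0 : ℤ) ≤ i + 1)]
    ring
  · rw [← insert_Ico_add_one_left_eq_Ico hi, sum_insert (by simp),
      Ico_eq_empty_of_le hi.le, Ico_eq_empty_of_le (by omega : i + 1 ≤ 0)]
    ring

lemma eq_of_add_one {G : ℤ → ℂ} (h₀ : G 0 = 0) (h : ∀ i, G (i + 1) = G i + c i) :
    G = cumSum c := by
  funext i
  induction i using Int.induction_on with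
  | zero => simp [h₀]
  | succ i ih => rw [h, add_one, ih]
  | pred i ih =>
    have := h (-i - 1)
    rw [sub_add_cancel, ih, ← sub_add_cancel (-(i : ℤ)) 1, add_one, sub_add_cancel] at this
    linear_combination -this

lemma injective : Function.Injective (cumSum (ℓ := ℓ)) := by
  intro c₁ c₂ h
  funext r
  have h₁ := add_one c₁ (r.cast : ℤ)
  rw [h, add_one, ZMod.intCast_cast, ZMod.cast_id', id] at h₁
  linear_combination -h₁

lemma sub_eq_sum_Ico {p q : ℤ} (h : p ≤ q) :
    cumSum c q - cumSum c p = ∑ k ∈ Ico p q, c k := by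
  induction q, h using Int.leInduction with
  | base => simp
  | succ q hpq ih => rw [add_one, ← sum_Ico_add_eq_sum_Ico_add_one hpq, ← ih]; ring

lemma add_card (i : ℤ) : cumSum c (i + ℓ) = cumSum c i + cumSum c ℓ := by
  have h : (fun i => cumSum c (i + ℓ) - cumSum c i - cumSum c ℓ) = cumSum (0 : ZMod ℓ → ℂ) := by
    refine eq_of_add_one 0 (by simp) fun i => ?_
    have hcast : ((i + ℓ : ℤ) : ZMod ℓ) = i := by simp
    rw [add_right_comm, add_one, add_one, hcast]
    simp only [Pi.zero_apply]
    ring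
  have hi : cumSum c (i + ℓ) - cumSum c i - cumSum c ℓ = 0 := by simpa [cumSum] using congrFun h i
  linear_combination hi

lemma add_mul_card (i : ℤ) (m : ℕ) : cumSum c (i + m * ℓ) = cumSum c i + m * cumSum c ℓ := by
  induction m with
  | zero => simp
  | succ m ih => push_cast; rw [add_one_mul, ← add_assoc, add_card, ih]; ring

lemma add_sub_congr {i j : ℤ} (h : (i : ZMod ℓ) = j) (n : ℤ) :
    cumSum c (i + n) - cumSum c i = cumSum c (j + n) - cumSum c j := by
  have hper : Function.Periodic (fun x => cumSum c (x + n) - cumSum c x) ℓ := fun x => by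
    simp only [add_right_comm x, add_card]; ring
  obtain ⟨k, hk⟩ := (ZMod.intCast_eq_intCast_iff_dvd_sub i j ℓ).1 h
  rw [show j = i + k * ℓ by linear_combination hk]
  exact (hper.int_mul k i).symm

end cumSum

lemma sStar_involutive (j : ZMod ℓ) : Function.Involutive (sStar ℓ j) := fun c => by
  funext i
  simp only [sStar, cycleCartan]
  push_cast
  ring

noncomputable def sStarPerm (j : ZMod ℓ) : Equiv.Perm (ZMod ℓ → ℂ) :=
  (sStar_involutive j).toPerm

lemma sStarPerm_mem_WStar (j : ZMod ℓ) : sStarPerm j ∈ WStar ℓ :=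
  Subgroup.subset_closure ⟨j, fun _ => rfl⟩

def affSwap (p : ZMod ℓ) (n : ℤ) (i : ℤ) : ℤ :=
  if (i : ZMod ℓ) = p then i + n else if (i : ZMod ℓ) = p + n then i - n else i

def affShift (u v : ZMod ℓ) (i : ℤ) : ℤ :=
  if (i : ZMod ℓ) = u then i + ℓ else if (i : ZMod ℓ) = v then i - ℓ else i

lemma affShift_eq (u : ZMod ℓ) {k : ℤ} (hk : (k : ZMod ℓ) ≠ 0) :
    affShift u (u + k) = affSwap (u + k : ZMod ℓ) (ℓ - k) ∘ affSwap u k := by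
  have hℓ : (ℓ : ZMod ℓ) = 0 := ZMod.natCast_self ℓ
  funext i
  simp only [affShift, affSwap, Function.comp_apply]
  split_ifs <;> push_cast at * <;> grind

lemma affSwap_add_card (p : ZMod ℓ) {n : ℤ} (hn : (n : ZMod ℓ) ≠ 0) :
    affSwap p (n + ℓ) = affShift (p + n : ZMod ℓ) p ∘ affSwap p n := by
  have hℓ : (ℓ : ZMod ℓ) = 0 := ZMod.natCast_self ℓ
  funext i
  simp only [affShift, affSwap, Function.comp_apply]
  split_ifs <;> push_cast at * <;> grind

lemma natCast_ne_zero_of_pos_of_lt {n : ℕ} (h₀ : 0 < n) (h : n < ℓ) : (n : ZMod ℓ) ≠ 0 :=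
  ZMod.val_pos.1 (by rwa [ZMod.val_cast_of_lt h])

variable (ℓ) in
def IsRealized (f : ℤ → ℤ) : Prop :=
  ∃ w ∈ WStar ℓ, ∀ c i, cumSum (w c) i = cumSum c (f i) - cumSum c (f 0)

lemma IsRealized.comp {f g : ℤ → ℤ} (hg : IsRealized ℓ g) (hf : IsRealized ℓ f) :
    IsRealized ℓ (g ∘ f) := by
  obtain ⟨v, hv, hvf⟩ := hf
  obtain ⟨w, hw, hwg⟩ := hg
  refine ⟨v * w, mul_mem hv hw, fun c i => ?_⟩
  simp only [Equiv.Perm.mul_apply, hvf, hwg, Function.comp_apply]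
  ring

section AffineMaps

variable [Fact (1 < ℓ)]

lemma cumSum_affSwap_one_add_one (c : ZMod ℓ → ℂ) (j : ZMod ℓ) (i : ℤ) :
    cumSum c (affSwap j 1 (i + 1)) = cumSum c (affSwap j 1 i) + sStar ℓ j c i := by
  have hcast : ((i + 1 : ℤ) : ZMod ℓ) = i + 1 := by push_cast; ring
  have e₀ := cumSum.add_one c (i - 1)
  have e₁ := cumSum.add_one c i
  have e₂ := cumSum.add_one c (i + 1)
  have hne : (i : ZMod ℓ) + 1 ≠ i := by simp
  simp only [sub_add_cancel, Int.cast_sub, Int.cast_one, hcast] at e₀ e₂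
  simp only [affSwap, sStar, cycleCartan, hcast, Int.cast_one]
  split_ifs <;> push_cast <;> grind

lemma isRealized_affSwap_one (j : ZMod ℓ) : IsRealized ℓ (affSwap j 1) := by
  refine ⟨sStarPerm j, sStarPerm_mem_WStar j, fun c => ?_⟩
  have h := cumSum.eq_of_add_one (sStar ℓ j c)
    (G := fun i => cumSum c (affSwap j 1 i) - cumSum c (affSwap j 1 0)) (sub_self _)
    fun i => by simp only [cumSum_affSwap_one_add_one]; ring
  exact fun i => (congrFun h i).symm

lemma affSwap_add_one (p : ZMod ℓ) {n : ℤ} (hn : (n : ZMod ℓ) ≠ 0) (hn₁ : (n : ZMod ℓ) + 1 ≠ 0) :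
    affSwap p (n + 1) = affSwap p 1 ∘ affSwap (p + 1) n ∘ affSwap p 1 := by
  have hone : (1 : ZMod ℓ) ≠ 0 := one_ne_zero
  funext i
  simp only [affSwap, Function.comp_apply]
  split_ifs <;> push_cast at * <;> grind

lemma isRealized_affSwap_of_lt (p : ZMod ℓ) {n : ℕ} (h₀ : 0 < n) (h : n < ℓ) :
    IsRealized ℓ (affSwap p n) := by
  induction n, h₀ using Nat.le_induction generalizing p with
  | base => exact isRealized_affSwap_one p
  | succ n hn ih =>
    rw [Nat.cast_succ,
      affSwap_add_one p (by exact_mod_cast natCast_ne_zero_of_pos_of_lt hn (by omega))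
        (by exact_mod_cast natCast_ne_zero_of_pos_of_lt (n := n + 1) (by omega) h)]
    exact (isRealized_affSwap_one p).comp ((ih (p + 1) (by omega)).comp (isRealized_affSwap_one p))

lemma isRealized_affShift {u v : ZMod ℓ} (h : u ≠ v) : IsRealized ℓ (affShift u v) := by
  obtain ⟨k, hk₀, hkℓ, rfl⟩ : ∃ k : ℕ, 0 < k ∧ k < ℓ ∧ v = u + ((k : ℤ) : ZMod ℓ) :=
    ⟨(v - u).val, ZMod.val_pos.2 (sub_ne_zero.2 h.symm), ZMod.val_lt _, by simp⟩
  have hswap := isRealized_affSwap_of_lt (u + ((k : ℤ) : ZMod ℓ)) (n := ℓ - k) (by omega) (by omega)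
  rw [Nat.cast_sub hkℓ.le] at hswap
  rw [affShift_eq u (by exact_mod_cast natCast_ne_zero_of_pos_of_lt hk₀ hkℓ)]
  exact hswap.comp (isRealized_affSwap_of_lt u hk₀ hkℓ)

lemma isRealized_affSwap (p : ZMod ℓ) {n : ℕ} (hn : (n : ZMod ℓ) ≠ 0) :
    IsRealized ℓ (affSwap p n) := by
  have hℓ : 1 < ℓ := Fact.out
  induction n using Nat.strong_induction_on with
  | _ n ih =>
    rcases lt_or_ge n ℓ with h | h
    · exact isRealized_affSwap_of_lt p (Nat.pos_of_ne_zero (by rintro rfl; simp at hn)) h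
    · have hn' : ((n - ℓ : ℕ) : ZMod ℓ) ≠ 0 := by simpa [Nat.cast_sub h] using hn
      have := affSwap_add_card p (n := (n - ℓ : ℕ)) (by exact_mod_cast hn')
      rw [← Nat.cast_add, Nat.sub_add_cancel h] at this
      rw [this]
      exact (isRealized_affShift (by simpa using hn')).comp (ih _ (by omega) hn')

end AffineMaps

lemma cumSum_affSwap (c : ZMod ℓ → ℂ) {p n : ℤ} (h : cumSum c (p + n) = cumSum c p) (i : ℤ) :
    cumSum c (affSwap (p : ZMod ℓ) n i) = cumSum c i := by
  unfold affSwap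
  split_ifs with h₁ h₂
  · linear_combination cumSum.add_sub_congr c h₁ n + h
  · have h₂' : ((i - n : ℤ) : ZMod ℓ) = p := by push_cast; rw [h₂]; ring
    have := cumSum.add_sub_congr c h₂' n
    rw [sub_add_cancel] at this
    linear_combination -this - h
  · rfl

lemma cumSum_affShift (c : ZMod ℓ → ℂ) (h : cumSum c ℓ = 0) (u v : ZMod ℓ) (i : ℤ) :
    cumSum c (affShift u v i) = cumSum c i := by
  unfold affShift
  split_ifs
  · rw [cumSum.add_card, h, add_zero]
  · rw [← add_zero (cumSum c (i - ℓ)), ← h, ← cumSum.add_card, sub_add_cancel]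
  · rfl

lemma WStarJ_le_stabilizer {J : Set (ZMod ℓ)} {d : ZMod ℓ → ℂ} (hd : ∀ j ∈ J, d j = 0) :
    WStarJ ℓ J ≤ MulAction.stabilizer (Equiv.Perm (ZMod ℓ → ℂ)) d := by
  refine (Subgroup.closure_le _).2 ?_
  rintro σ ⟨j, hj, hσ⟩
  ext i
  simp [Equiv.Perm.smul_def, hσ, sStar, hd j hj]

section Standard

variable {c d : ZMod ℓ → ℂ}
  (hstab : ∀ σ ∈ WStar ℓ, σ c = c → σ ∈ WStarJ ℓ {i | c i = 0}) (hd : ∀ j, c j = 0 → d j = 0)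
include hstab hd

lemma cumSum_comp_sub_of_isRealized {f : ℤ → ℤ} (hf : IsRealized ℓ f)
    (hc : ∀ i, cumSum c (f i) = cumSum c i) (i : ℤ) :
    cumSum d (f i) - cumSum d (f 0) = cumSum d i := by
  obtain ⟨w, hw, hwf⟩ := hf
  have hwc : w c = c :=
    cumSum.injective <| funext fun i => by rw [hwf, hc, hc, cumSum.zero, sub_zero]
  have hwd : w d = d := WStarJ_le_stabilizer hd (hstab w hw hwc)
  rw [← hwf, hwd]

lemma cumSum_add_eq_of_cumSum_add_eq [Fact (1 < ℓ)] {p : ℤ} {n : ℕ}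
    (h : cumSum c (p + n) = cumSum c p) : cumSum d (p + n) = cumSum d p := by
  by_cases hn : (n : ZMod ℓ) = 0
  · obtain ⟨m, rfl⟩ := (ZMod.natCast_eq_zero_iff n ℓ).1 hn
    rw [mul_comm, Nat.cast_mul, cumSum.add_mul_card] at h ⊢
    rcases mul_eq_zero.1 (add_eq_left.1 h) with hm | hc
    · simp [hm]
    have hshift := cumSum_comp_sub_of_isRealized hstab hd (isRealized_affShift zero_ne_one)
      (cumSum_affShift c hc 0 1) 1
    have h₀ : affShift (0 : ZMod ℓ) 1 0 = ℓ := by simp [affShift]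
    have h₁ : affShift (0 : ZMod ℓ) 1 1 = 1 - ℓ := by simp [affShift]
    have hper := cumSum.add_card d (1 - ℓ)
    rw [h₀, h₁] at hshift
    rw [sub_add_cancel] at hper
    rw [show cumSum d ℓ = 0 by linear_combination -(hshift + hper) / 2, mul_zero, add_zero]
  · have hswap := cumSum_comp_sub_of_isRealized hstab hd (isRealized_affSwap (p : ZMod ℓ) hn)
      (cumSum_affSwap c h)
    have h₁ := hswap p
    have h₂ := hswap (p + n)
    rw [show affSwap (p : ZMod ℓ) n p = p + n by simp [affSwap]] at h₁
    rw [show affSwap (p : ZMod ℓ) n (p + n) = p by simp [affSwap, hn]] at h₂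
    linear_combination (h₁ - h₂) / 2

end Standard

open scoped ComplexOrder in
lemma eq_zero_of_sum_indicator_support_eq_zero {ι α : Type*} {c : α → ℂ} {g : ι → α}
    {s : Finset ι} (h : ∑ k ∈ s, (Function.support c).indicator (1 : α → ℂ) (g k) = 0) :
    ∀ k ∈ s, c (g k) = 0 := by
  intro k hk
  have := (sum_eq_zero_iff_of_nonneg fun k _ =>
    Set.indicator_nonneg (fun _ _ => zero_le_one) (g k)).1 h k hk
  simpa using this

/-- Assume `ℓ ≥ 2`, let `c ∈ ℂ^{ℤ/ℓℤ}`, set `J = {i ∈ ℤ/ℓℤ : c_i = 0}`, and suppose `c`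
is `J`-standard, i.e., the stabilizer of `c` in `W` equals `W_J`.  Then for all integers
`a ≤ b`, if `Σ_{i=a}^{b} c_{i mod ℓ} = 0` then `c_{i mod ℓ} = 0` for every integer `i`
with `a ≤ i ≤ b`. -/
theorem JStandard_consecutive_sum_zero (ℓ : ℕ) (hℓ : 2 ≤ ℓ) (c : ZMod ℓ → ℂ)
    (hstd : ∀ σ : Equiv.Perm (ZMod ℓ → ℂ), σ ∈ WStar ℓ →
      (σ c = c ↔ σ ∈ WStarJ ℓ {i : ZMod ℓ | c i = 0})) :
    ∀ a b : ℤ, a ≤ b → (∑ i ∈ Finset.Icc a b, c (i : ZMod ℓ)) = 0 →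
      ∀ i ∈ Finset.Icc a b, c (i : ZMod ℓ) = 0 := by
  have : Fact (1 < ℓ) := ⟨hℓ⟩
  intro a b hab hsum
  obtain ⟨n, hn⟩ := Int.le.dest (show a ≤ b + 1 by omega)
  have hc : cumSum c (a + n) = cumSum c a := by
    rw [← sub_eq_zero, cumSum.sub_eq_sum_Ico c (by omega), hn, Ico_add_one_right_eq_Icc, hsum]
  have hd := cumSum_add_eq_of_cumSum_add_eq (fun σ hσ => (hstd σ hσ).1)
    (d := (Function.support c).indicator 1) (fun j hj => by simp [hj]) hc
  rw [← sub_eq_zero, cumSum.sub_eq_sum_Ico _ (by omega), hn, Ico_add_one_right_eq_Icc] at hd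
  exact eq_zero_of_sum_indicator_support_eq_zero hd
end

section
/- Assume Σ_{i ∈ ℤ/ℓℤ} c_i ≠ 0 and that the representation (V_i, X_i, Y_i, v, y) is simple. Then its ℤ-grading, if it exists, is unique: if (U_j)_{j∈ℤ} and (U′_j)_{j∈ℤ} are both ℤ-gradings of the representation, then U_j = U′_j for every j ∈ ℤ. -/
/-!
Summing the intersections `U j ⊓ U' j` over each residue class of `j` mod `ℓ` gives, together
with `W_∞ = ℂ`, a subrepresentation containing `v`; by simplicity it is everything. So each
`U j` lies in the sum of the `U k ⊓ U' k` with `k ≡ j`, and independence of the `U k` in that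
class (via the modular law) puts `U j` inside `U' j`. By symmetry `U j = U' j`.
-/

open Submodule

/-- A ℤ-grading of a representation `(Vc, X, Y, v, y)` of the (framed) cyclic quiver of
length `ℓ`, realized on a single space `V` with `ℤ/ℓℤ`-components `Vc i`: a family of
subspaces `U j ⊆ V_{j mod ℓ}` indexed by `j ∈ ℤ`, all but finitely many zero, such that
each `V i` is the internal direct sum of the `U j` over `j ≡ i (mod ℓ)`, compatible with
`X`, `Y`, with `v ∈ U 0`, and with `y` vanishing on `U j` for `j ≠ 0`, `j ≡ 0 (mod ℓ)`. -/
def IsZGrading (ℓ : ℕ) {V : Type} [AddCommGroup V] [Module ℂ V]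
    (Vc : ZMod ℓ → Submodule ℂ V) (X Y : V →ₗ[ℂ] V) (v : V) (y : V →ₗ[ℂ] ℂ)
    (U : ℤ → Submodule ℂ V) : Prop :=
  {j : ℤ | U j ≠ ⊥}.Finite ∧
  (∀ j : ℤ, U j ≤ Vc (j : ZMod ℓ)) ∧
  (∀ i : ZMod ℓ, iSupIndep (fun j : {j : ℤ // (j : ZMod ℓ) = i} => U j.1)) ∧
  (∀ i : ZMod ℓ, (⨆ j : {j : ℤ // (j : ZMod ℓ) = i}, U j.1) = Vc i) ∧
  (∀ j : ℤ, ∀ u ∈ U (j + 1), X u ∈ U j) ∧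
  (∀ j : ℤ, ∀ u ∈ U j, Y u ∈ U (j + 1)) ∧
  v ∈ U 0 ∧
  (∀ j : ℤ, j ≠ 0 → (j : ZMod ℓ) = 0 → ∀ u ∈ U j, y u = 0)

theorem iSupIndep.le_of_le_iSup_inf {α ι : Type*} [CompleteLattice α] [IsModularLattice α]
    {a b : ι → α} (ha : iSupIndep a) {j : ι} (h : a j ≤ ⨆ k, a k ⊓ b k) : a j ≤ b j := by
  set rest := ⨆ (k) (_ : k ≠ j), a k ⊓ b k
  have hrest : rest ⊓ a j = ⊥ :=
    ((ha j).symm.mono_left (iSup₂_mono fun k _ => inf_le_left)).eq_bot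
  calc a j = (a j ⊓ b j ⊔ rest) ⊓ a j := by
        rw [← iSup_split_single (fun k => a k ⊓ b k) j]; exact (inf_eq_right.mpr h).symm
    _ = a j ⊓ b j := by rw [sup_inf_assoc_of_le _ inf_le_left, hrest, sup_bot_eq]
    _ ≤ b j := inf_le_right

section ResidueSup

variable {R M : Type*} [Ring R] [AddCommGroup M] [Module R M] (ℓ : ℕ)

def residueSup (C : ℤ → Submodule R M) (i : ZMod ℓ) : Submodule R M :=
  ⨆ k : {k : ℤ // (k : ZMod ℓ) = i}, C k.1

variable {ℓ}

theorem residueSup_mono {C D : ℤ → Submodule R M} (h : ∀ k, C k ≤ D k) (i : ZMod ℓ) :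
    residueSup ℓ C i ≤ residueSup ℓ D i :=
  iSup_mono fun k => h k.1

theorem mem_residueSup_of_mem {C : ℤ → Submodule R M} {k : ℤ} {u : M} (hu : u ∈ C k) :
    u ∈ residueSup ℓ C k :=
  mem_iSup_of_mem (⟨k, rfl⟩ : {k' : ℤ // (k' : ZMod ℓ) = k}) hu

theorem map_mem_residueSup {C : ℤ → Submodule R M} {f : M →ₗ[R] M} {d : ℤ}
    (hf : ∀ k, ∀ u ∈ C k, f u ∈ C (k + d)) {i : ZMod ℓ} {u : M}
    (hu : u ∈ residueSup ℓ C i) : f u ∈ residueSup ℓ C (i + d) := by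
  refine (iSup_le fun k w hw => ?_ : residueSup ℓ C i ≤ (residueSup ℓ C (i + d)).comap f) hu
  have hfw := mem_residueSup_of_mem (ℓ := ℓ) (hf k.1 w hw)
  rwa [Int.cast_add, k.2] at hfw

theorem le_of_le_residueSup_inf {A B : ℤ → Submodule R M} {j : ℤ}
    (hA : iSupIndep fun k : {k : ℤ // (k : ZMod ℓ) = j} => A k.1)
    (h : A j ≤ residueSup ℓ (fun k => A k ⊓ B k) j) : A j ≤ B j := by
  have key := hA.le_of_le_iSup_inf (j := ⟨j, rfl⟩) (b := fun k => B k.1)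
  exact key h

end ResidueSup

theorem zgrading_unique_general (ℓ : ℕ)
    (V : Type) [AddCommGroup V] [Module ℂ V]
    (Vc : ZMod ℓ → Submodule ℂ V)
    (X Y : V →ₗ[ℂ] V)
    (v : V)
    (y : V →ₗ[ℂ] ℂ)
    (hsimple : ∀ (W : ZMod ℓ → Submodule ℂ V) (Winf : Submodule ℂ ℂ),
      (∀ i, W i ≤ Vc i) →
      (∀ i : ZMod ℓ, ∀ u ∈ W i, X u ∈ W (i - 1)) →
      (∀ i : ZMod ℓ, ∀ u ∈ W i, Y u ∈ W (i + 1)) →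
      (∀ lam ∈ Winf, lam • v ∈ W 0) →
      (∀ u ∈ W 0, y u ∈ Winf) →
      ((∀ i, W i = ⊥) ∧ Winf = ⊥) ∨ ((∀ i, W i = Vc i) ∧ Winf = ⊤))
    (U U' : ℤ → Submodule ℂ V)
    (hU : IsZGrading ℓ Vc X Y v y U) (hU' : IsZGrading ℓ Vc X Y v y U') :
    ∀ j : ℤ, U j = U' j := by
  obtain ⟨-, hle, hind, hsup, hX, hY, hv, -⟩ := hU
  obtain ⟨-, hle', hind', -, hX', hY', hv', -⟩ := hU'
  set W := residueSup ℓ (fun k => U k ⊓ U' k)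
  have hW_le (i : ZMod ℓ) : W i ≤ Vc i := hsup i ▸ residueSup_mono (fun k => inf_le_left) i
  have hWX (i : ZMod ℓ) (u : V) (hu : u ∈ W i) : X u ∈ W (i - 1) := by
    have hXk (k : ℤ) (w : V) (hw : w ∈ U k ⊓ U' k) : X w ∈ U (k + -1) ⊓ U' (k + -1) := by
      rw [← neg_add_cancel_right k 1] at hw
      exact ⟨hX _ w hw.1, hX' _ w hw.2⟩
    simpa [← sub_eq_add_neg] using map_mem_residueSup hXk hu
  have hWY (i : ZMod ℓ) (u : V) (hu : u ∈ W i) : Y u ∈ W (i + 1) := by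
    have hYk (k : ℤ) (w : V) (hw : w ∈ U k ⊓ U' k) : Y w ∈ U (k + 1) ⊓ U' (k + 1) :=
      ⟨hY k w hw.1, hY' k w hw.2⟩
    simpa using map_mem_residueSup hYk hu
  have hvW : v ∈ W 0 := Int.cast_zero (R := ZMod ℓ) ▸ mem_residueSup_of_mem ⟨hv, hv'⟩
  obtain ⟨-, htop⟩ | ⟨hW_eq, -⟩ := hsimple W ⊤ hW_le hWX hWY
    (fun lam _ => smul_mem _ lam hvW) (fun _ _ => mem_top)
  · exact absurd htop top_ne_bot
  have hW_eq' (i : ZMod ℓ) : residueSup ℓ (fun k => U' k ⊓ U k) i = Vc i := by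
    simpa only [inf_comm] using hW_eq i
  exact fun j => le_antisymm (le_of_le_residueSup_inf (hind j) ((hle j).trans (hW_eq j).ge))
    (le_of_le_residueSup_inf (hind' j) ((hle' j).trans (hW_eq' j).ge))

/-- Assume `Σ_{i ∈ ℤ/ℓℤ} c_i ≠ 0` and that the representation `(V_i, X_i, Y_i, v, y)`
of the framed cyclic quiver (with moment map relations with parameter `c`) is simple.
Then its ℤ-grading, if it exists, is unique: if `(U_j)` and `(U′_j)` are both
ℤ-gradings of the representation, then `U_j = U′_j` for every `j ∈ ℤ`. -/
theorem zgrading_unique (ℓ : ℕ) [NeZero ℓ] (c : ZMod ℓ → ℂ)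
    (hc : (∑ i : ZMod ℓ, c i) ≠ 0)
    (V : Type) [AddCommGroup V] [Module ℂ V] [FiniteDimensional ℂ V]
    (Vc : ZMod ℓ → Submodule ℂ V) (hVc : DirectSum.IsInternal Vc)
    (X Y : V →ₗ[ℂ] V)
    (hX : ∀ i : ZMod ℓ, ∀ u ∈ Vc i, X u ∈ Vc (i - 1))
    (hY : ∀ i : ZMod ℓ, ∀ u ∈ Vc i, Y u ∈ Vc (i + 1))
    (v : V) (hv : v ∈ Vc 0)
    (y : V →ₗ[ℂ] ℂ) (hy : ∀ i : ZMod ℓ, i ≠ 0 → ∀ u ∈ Vc i, y u = 0)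
    (hmoment : ∀ i : ZMod ℓ, ∀ u ∈ Vc i,
      X (Y u) - Y (X u) + (if i = 0 then y u • v else 0) = c i • u)
    (hsimple : ∀ (W : ZMod ℓ → Submodule ℂ V) (Winf : Submodule ℂ ℂ),
      (∀ i, W i ≤ Vc i) →
      (∀ i : ZMod ℓ, ∀ u ∈ W i, X u ∈ W (i - 1)) →
      (∀ i : ZMod ℓ, ∀ u ∈ W i, Y u ∈ W (i + 1)) →
      (∀ lam ∈ Winf, lam • v ∈ W 0) →
      (∀ u ∈ W 0, y u ∈ Winf) →
      ((∀ i, W i = ⊥) ∧ Winf = ⊥) ∨ ((∀ i, W i = Vc i) ∧ Winf = ⊤))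
    (U U' : ℤ → Submodule ℂ V)
    (hU : IsZGrading ℓ Vc X Y v y U) (hU' : IsZGrading ℓ Vc X Y v y U') :
    ∀ j : ℤ, U j = U' j :=
  zgrading_unique_general ℓ V Vc X Y v y hsimple U U' hU hU'
end
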